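/- arXiv:2112.06062 — 3 statements merged into one kernel-verified Lean document; each statement's English description precedes it below -/
import Mathlib

section
/- If C1 and C2 are two distinct fully populated clauses over V (sibling clauses), then for every clause D1 in P(C1) \ P(C2), there exists a subset V' of V and a clause D2 ⊆ C2 such that D1 and D2 are distinct fully populated clauses over V'. -/
open Finset

variable {V : Type*}

/-- A literal is a variable paired with a polarity: `(x, true)` is the positive
literal `x`, `(x, false)` is the negated literal `x̄`. It evaluates to true under
an assignment `α` iff `α x` matches the polarity. -/
def evalLit (α : V → Bool) (l : V × Bool) : Bool := α l.1 == l.2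

/-- A clause (finite set of literals) evaluates to true iff some literal is true. -/
def evalClause (α : V → Bool) (C : Finset (V × Bool)) : Prop := ∃ l ∈ C, evalLit α l = true

/-- A non-tautology clause contains at most one of `x`, `x̄` for each variable. -/
def NonTaut (C : Finset (V × Bool)) : Prop := ∀ x : V, ¬((x, true) ∈ C ∧ (x, false) ∈ C)

/-- A clause is fully populated over (all of) `V` if it contains exactly one of
`x`, `x̄` for every variable `x`. -/
def FullyPop (C : Finset (V × Bool)) : Prop :=
  ∀ x : V, ((x, true) ∈ C ∧ (x, false) ∉ C) ∨ ((x, false) ∈ C ∧ (x, true) ∉ C)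

/-- A clause is fully populated over a subset `V'` of the variables if it contains
exactly one literal per variable of `V'` and no literal on variables outside `V'`. -/
def FullyPopOn (V' : Finset V) (C : Finset (V × Bool)) : Prop :=
  (∀ x ∈ V', ((x, true) ∈ C ∧ (x, false) ∉ C) ∨ ((x, false) ∈ C ∧ (x, true) ∉ C)) ∧
  (∀ x : V, x ∉ V' → (x, true) ∉ C ∧ (x, false) ∉ C)

/-- `litCount F l` is the number of clauses of `F` containing the literal `l`. -/
def litCount [DecidableEq V] (F : Finset (Finset (V × Bool))) (l : V × Bool) : ℕ :=
  (F.filter (fun C => l ∈ C)).card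

/-- A CNF formula (finite set of clauses) is satisfiable if some assignment makes
every clause evaluate to true. -/
def Satisfiable (F : Finset (Finset (V × Bool))) : Prop :=
  ∃ α : V → Bool, ∀ C ∈ F, evalClause α C

theorem stmt4 (C₁ C₂ : Finset (V × Bool)) (h₁ : FullyPop C₁) (h₂ : FullyPop C₂)
    (hne : C₁ ≠ C₂) :
    ∀ D₁ : Finset (V × Bool), D₁ ⊆ C₁ → ¬ D₁ ⊆ C₂ →
      ∃ V' : Finset V, ∃ D₂ : Finset (V × Bool), D₂ ⊆ C₂ ∧
        FullyPopOn V' D₁ ∧ FullyPopOn V' D₂ ∧ D₁ ≠ D₂ := by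
  classical
  intro D₁ hD₁ hD₁₂
  refine ⟨D₁.image Prod.fst, C₂.filter (fun l => l.1 ∈ D₁.image Prod.fst), filter_subset _ _,
    ⟨?_, ?_⟩, ⟨?_, ?_⟩, ?_⟩
  · intro x hx
    obtain ⟨⟨y, b⟩, hl, hfst⟩ := mem_image.mp hx
    simp only at hfst
    subst hfst
    rcases h₁ y with ⟨ht, hf⟩ | ⟨hf, ht⟩
    · cases b
      · exact absurd (hD₁ hl) hf
      · exact Or.inl ⟨hl, fun h => hf (hD₁ h)⟩
    · cases b
      · exact Or.inr ⟨hl, fun h => ht (hD₁ h)⟩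
      · exact absurd (hD₁ hl) ht
  · intro x hx
    constructor <;> intro h <;> exact hx (mem_image.mpr ⟨_, h, rfl⟩)
  · intro x hx
    rcases h₂ x with ⟨ht, hf⟩ | ⟨hf, ht⟩
    · exact Or.inl ⟨mem_filter.mpr ⟨ht, hx⟩, fun h => hf (mem_filter.mp h).1⟩
    · exact Or.inr ⟨mem_filter.mpr ⟨hf, hx⟩, fun h => ht (mem_filter.mp h).1⟩
  · intro x hx
    constructor <;> intro h <;> exact hx (mem_filter.mp h).2
  · intro hEq
    exact hD₁₂ (fun l hl => (mem_filter.mp (hEq ▸ hl)).1)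
end

section
/- Let F be a CNF formula over n variables with no tautology clauses, and for a literal ℓ let #(F, ℓ) denote the number of clauses of F containing ℓ. If there is a variable x with min(#(F, x), #(F, x̄)) > 3^{n−1} − 2^{n−1}, then F is unsatisfiable. -/
open Finset

variable {V : Type*}

theorem stmt10 [Fintype V] [DecidableEq V] (hn : 1 ≤ Fintype.card V)
    (F : Finset (Finset (V × Bool))) (hF : ∀ D ∈ F, NonTaut D) (x : V)
    (h : min (litCount F (x, true)) (litCount F (x, false)) >
      3 ^ (Fintype.card V - 1) - 2 ^ (Fintype.card V - 1)) :
    ¬ Satisfiable F := by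
  rintro ⟨α, hα⟩
  classical
  set b := !(α x) with hb
  let toF : Finset (V × Bool) → (V → Option Bool) := fun C y =>
    if (y, true) ∈ C then some true else if (y, false) ∈ C then some false else none
  have htoF : ∀ C, NonTaut C → ∀ y p, toF C y = some p ↔ (y, p) ∈ C := by
    intro C hC y p
    by_cases h1 : (y, true) ∈ C
    · have h2 : (y, false) ∉ C := fun h2 => hC y ⟨h1, h2⟩
      cases p <;> simp [toF, h1, h2]
    · by_cases h2 : (y, false) ∈ C
      · cases p <;> simp [toF, h1, h2]
      · cases p <;> simp [toF, h1, h2]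
  set S := F.filter (fun C => (x, b) ∈ C) with hS
  let tA : V → Finset (Option Bool) := fun y => if y = x then {some b} else Finset.univ
  let tB : V → Finset (Option Bool) := fun y => if y = x then {some b} else {none, some (!(α y))}
  have hmapsto : ∀ C ∈ S, toF C ∈ Fintype.piFinset tA \ Fintype.piFinset tB := by
    intro C hC
    rw [hS, mem_filter] at hC
    obtain ⟨hCF, hxbC⟩ := hC
    have hNT := hF C hCF
    have hsat := hα C hCF
    rw [mem_sdiff]
    constructor
    · rw [Fintype.mem_piFinset]
      intro y
      by_cases hy : y = x
      · subst hy
        simp only [tA, if_pos rfl, Finset.mem_singleton]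
        exact (htoF C hNT y b).2 hxbC
      · simp [tA, hy]
    · intro hmem
      rw [Fintype.mem_piFinset] at hmem
      obtain ⟨⟨y, p⟩, hlC, hl⟩ := hsat
      have hyp : α y = p := by simpa [evalLit] using hl
      have hyx : y ≠ x := by
        rintro rfl
        refine hNT y ?_
        have hb' : b = !p := by rw [hb, hyp]
        cases p
        · exact ⟨by simpa [hb'] using hxbC, hlC⟩
        · exact ⟨hlC, by simpa [hb'] using hxbC⟩
      have h1 : toF C y = some (α y) := by rw [hyp]; exact (htoF C hNT y p).2 hlC
      have h2 := hmem y
      rw [h1] at h2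
      simp only [tB, if_neg hyx, Finset.mem_insert, Finset.mem_singleton] at h2
      rcases h2 with h2 | h2
      · cases h2
      · have := Option.some.inj h2
        simp at this
  have hinj : Set.InjOn toF S := by
    intro C hC D hD hCD
    have hNC := hF C (Finset.mem_filter.mp hC).1
    have hND := hF D (Finset.mem_filter.mp hD).1
    ext ⟨y, p⟩
    rw [← htoF C hNC y p, ← htoF D hND y p, hCD]
  have hcard : S.card ≤ (Fintype.piFinset tA \ Fintype.piFinset tB).card :=
    Finset.card_le_card_of_injOn toF hmapsto hinj
  have hBA : Fintype.piFinset tB ⊆ Fintype.piFinset tA := by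
    intro f hf
    rw [Fintype.mem_piFinset] at hf ⊢
    intro y
    by_cases hy : y = x
    · subst hy
      have := hf y
      simpa [tA, tB] using this
    · simp [tA, hy]
  have hA : (Fintype.piFinset tA).card = 3 ^ (Fintype.card V - 1) := by
    rw [Fintype.card_piFinset]
    have hv : ∀ y, (tA y).card = if y = x then 1 else 3 := by
      intro y; by_cases hy : y = x <;> simp [tA, hy]
    simp_rw [hv]
    rw [← Finset.mul_prod_erase Finset.univ _ (Finset.mem_univ x), if_pos rfl, one_mul]
    rw [Finset.prod_congr rfl (fun y hy => if_neg (Finset.ne_of_mem_erase hy)),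
      Finset.prod_const, Finset.card_erase_of_mem (Finset.mem_univ x), Finset.card_univ]
  have hB : (Fintype.piFinset tB).card = 2 ^ (Fintype.card V - 1) := by
    rw [Fintype.card_piFinset]
    have hv : ∀ y, (tB y).card = if y = x then 1 else 2 := by
      intro y
      by_cases hy : y = x
      · simp [tB, hy]
      · simp only [tB, if_neg hy]
        rw [Finset.card_insert_of_notMem (by simp), Finset.card_singleton]
    simp_rw [hv]
    rw [← Finset.mul_prod_erase Finset.univ _ (Finset.mem_univ x), if_pos rfl, one_mul]
    rw [Finset.prod_congr rfl (fun y hy => if_neg (Finset.ne_of_mem_erase hy)),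
      Finset.prod_const, Finset.card_erase_of_mem (Finset.mem_univ x), Finset.card_univ]
  have hsd : (Fintype.piFinset tA \ Fintype.piFinset tB).card =
      3 ^ (Fintype.card V - 1) - 2 ^ (Fintype.card V - 1) := by
    rw [Finset.card_sdiff_of_subset hBA, hA, hB]
  have hlit : litCount F (x, b) ≤ 3 ^ (Fintype.card V - 1) - 2 ^ (Fintype.card V - 1) := by
    rw [← hsd]
    exact hcard
  have hmin : min (litCount F (x, true)) (litCount F (x, false)) ≤ litCount F (x, b) := by
    cases hax : α x
    · have : b = true := by rw [hb, hax]; rfl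
      rw [this]; exact min_le_left _ _
    · have : b = false := by rw [hb, hax]; rfl
      rw [this]; exact min_le_right _ _
  omega
end

section
/- Let F be a CNF formula over n variables with no tautology clauses and let x be a variable with #(F, x) ≤ 3^{n−1} − 2^{n−1} < #(F, x̄). Then every satisfying assignment of F maps x to false. -/
open Finset

variable {V : Type*}

theorem stmt11 [Fintype V] [DecidableEq V] (hn : 1 ≤ Fintype.card V)
    (F : Finset (Finset (V × Bool))) (hF : ∀ D ∈ F, NonTaut D) (x : V)
    (h₁ : litCount F (x, true) ≤ 3 ^ (Fintype.card V - 1) - 2 ^ (Fintype.card V - 1))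
    (h₂ : 3 ^ (Fintype.card V - 1) - 2 ^ (Fintype.card V - 1) < litCount F (x, false)) :
    ∀ α : V → Bool, (∀ C ∈ F, evalClause α C) → α x = false := by
  intro α hα
  by_contra hax
  rw [Bool.not_eq_false] at hax
  classical
  set S := F.filter (fun C => ((x, false) : V × Bool) ∈ C) with hS
  let V' := {y : V // y ≠ x}
  let g : Finset (V × Bool) → (V' → Option Bool) := fun C y =>
    if (y.1, true) ∈ C then some true else if (y.1, false) ∈ C then some false else none
  let T := (Finset.univ : Finset (V' → Option Bool)).filter (fun h => ∃ y, h y = some (α y.1))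
  have hmaps : ∀ C ∈ S, g C ∈ T := by
    intro C hC
    simp only [hS, Finset.mem_filter] at hC
    obtain ⟨hCF, hxC⟩ := hC
    obtain ⟨l, hlC, hl⟩ := hα C hCF
    have hαl : α l.1 = l.2 := by simpa [evalLit] using hl
    have hlx : l.1 ≠ x := by
      rcases l with ⟨y, b⟩
      rintro rfl
      cases b
      · simp [evalLit, hax] at hl
      · exact hF C hCF y ⟨hlC, hxC⟩
    simp only [T, Finset.mem_filter, Finset.mem_univ, true_and]
    refine ⟨⟨l.1, hlx⟩, ?_⟩
    rcases l with ⟨y, b⟩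
    cases b
    · have h1 : (y, true) ∉ C := fun h => hF C hCF y ⟨h, hlC⟩
      simp only at hαl
      simp [g, h1, hlC, hαl]
    · simp only at hαl
      simp [g, hlC, hαl]
  have hinj : Set.InjOn g S := by
    intro C hC D hD hgCD
    simp only [hS, Finset.coe_filter, Set.mem_setOf_eq] at hC hD
    ext ⟨y, b⟩
    by_cases hy : y = x
    · subst hy
      cases b
      · simp [hC.2, hD.2]
      · constructor
        · intro h; exact absurd ⟨h, hC.2⟩ (hF C hC.1 y)
        · intro h; exact absurd ⟨h, hD.2⟩ (hF D hD.1 y)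
    · have hthis := congrFun hgCD ⟨y, hy⟩
      simp only [g] at hthis
      cases b
      · constructor
        · intro h
          have h1 : (y, true) ∉ C := fun h' => hF C hC.1 y ⟨h', h⟩
          simp only [h1, if_false, h, if_true] at hthis
          by_contra h2
          by_cases h3 : (y, true) ∈ D
          · simp [h3] at hthis
          · simp [h3, h2] at hthis
        · intro h
          have h1 : (y, true) ∉ D := fun h' => hF D hD.1 y ⟨h', h⟩
          simp only [h1, if_false, h, if_true] at hthis
          by_contra h2
          by_cases h3 : (y, true) ∈ C
          · simp [h3] at hthis
          · simp [h3, h2] at hthis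
      · constructor
        · intro h
          simp only [h, if_true] at hthis
          by_contra h2
          by_cases h3 : (y, false) ∈ D
          · simp [h2, h3] at hthis
          · simp [h2, h3] at hthis
        · intro h
          simp only [h, if_true] at hthis
          by_contra h2
          by_cases h3 : (y, false) ∈ C
          · simp [h2, h3] at hthis
          · simp [h2, h3] at hthis
  have hcard1 : S.card ≤ T.card := Finset.card_le_card_of_injOn g hmaps hinj
  have hV' : Fintype.card V' = Fintype.card V - 1 := by
    simp [V', Fintype.card_subtype_compl]
  have hTot : (Finset.univ : Finset (V' → Option Bool)).card = 3 ^ (Fintype.card V - 1) := by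
    rw [Finset.card_univ, Fintype.card_fun, hV']
    norm_num
  have h2card : ((Finset.univ : Finset (V' → Bool))).card = 2 ^ (Fintype.card V - 1) := by
    rw [Finset.card_univ, Fintype.card_fun, hV', Fintype.card_bool]
  have hNeg : ((Finset.univ : Finset (V' → Option Bool)).filter
      (fun h => ¬ ∃ y, h y = some (α y.1))).card = 2 ^ (Fintype.card V - 1) := by
    rw [← h2card]
    refine Finset.card_bij' (fun h _ => fun y => decide (h y = none))
      (fun b _ => fun y => if b y then none else some (!(α y.1))) ?_ ?_ ?_ ?_
    · intro h hh
      exact Finset.mem_univ _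
    · intro b hb
      simp only [Finset.mem_filter, Finset.mem_univ, true_and]
      rintro ⟨y, hy⟩
      by_cases hby : b y
      · simp [hby] at hy
      · simp only [hby, Bool.false_eq_true, if_false, Option.some.injEq] at hy
        exact Bool.not_ne_self (α y.1) hy
    · intro h hh
      simp only [Finset.mem_filter, Finset.mem_univ, true_and, not_exists] at hh
      funext y
      cases hy : h y with
      | none => simp [hy]
      | some c =>
        have hc : c ≠ α y.1 := fun h' => hh y (by rw [hy, h'])
        have hcc : c = !(α y.1) := by
          cases c <;> cases hα' : α y.1 <;> simp_all
        simp [hy, hcc]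
    · intro b hb
      funext y
      by_cases hby : b y
      · simp [hby]
      · simp [hby]
  have hTcard : T.card + 2 ^ (Fintype.card V - 1) = 3 ^ (Fintype.card V - 1) := by
    have hsum := Finset.card_filter_add_card_filter_not
      (s := (Finset.univ : Finset (V' → Option Bool)))
      (p := fun h => ∃ y, h y = some (α y.1))
    rw [hNeg, hTot] at hsum
    exact hsum
  have hlc : litCount F ((x, false) : V × Bool) = S.card := rfl
  have hT : T.card = 3 ^ (Fintype.card V - 1) - 2 ^ (Fintype.card V - 1) :=
    Nat.eq_sub_of_add_eq hTcard
  exact absurd h₂ (not_lt.mpr (by rw [hlc, ← hT]; exact hcard1))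
end
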